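/- Assume the minipatch ranking framework on a pool S with |S| = N ≥ m, and run RAMP with B minipatches on S; let q = m/N. Then for every feature j ∈ S and every ε > 0, P(r̄_j ≥ μ_j + ε) ≤ exp(−Bq/8) + exp(−Bq·ε²/(4(m − 1)²)), and likewise P(r̄_j ≤ μ_j − ε) ≤ exp(−Bq/8) + exp(−Bq·ε²/(4(m − 1)²)). -/

import Mathlib

open MeasureTheory ProbabilityTheory Real
open scoped ENNReal Classical

noncomputable section

instance finsetMeasurableSpace {α : Type*} : MeasurableSpace (Finset α) := ⊤

/-- A random minipatch ranking on the pool `S ⊆ {1,…,M}`: `F` is uniformly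
distributed over the size-`m` subsets of `S`, and (pointwise, hence conditionally
on `F`) the ranks `rt j` for `j ∈ F` form a bijection from `F` onto `{0,…,m−1}`. -/
structure IsMinipatchRanking {Ω : Type*} [MeasurableSpace Ω] (μ : Measure Ω) {M : ℕ}
    (m : ℕ) (S : Finset (Fin M)) (F : Ω → Finset (Fin M)) (rt : Fin M → Ω → ℕ) : Prop where
  measF : Measurable F
  measRt : ∀ j, Measurable (rt j)
  subset : ∀ ω, F ω ⊆ S
  card_eq : ∀ ω, (F ω).card = m
  uniform : ∀ A : Finset (Fin M), A ⊆ S → A.card = m →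
    μ {ω | F ω = A} = ((S.card.choose m : ℝ≥0∞))⁻¹
  bij : ∀ ω, Set.BijOn (fun j => rt j ω) (F ω : Set (Fin M)) (Set.Iio m)

/-- `μ_j = E[r̃_j | j ∈ F]`. -/
def muRank {Ω : Type*} [MeasurableSpace Ω] (μ : Measure Ω) {M : ℕ}
    (F : Ω → Finset (Fin M)) (rt : Fin M → Ω → ℕ) (j : Fin M) : ℝ :=
  ∫ ω, (rt j ω : ℝ) ∂ μ[|{ω | j ∈ F ω}]

/-- Rank Consistency with parameter `p`. -/
def RankConsistency {Ω : Type*} [MeasurableSpace Ω] (μ : Measure Ω) {M : ℕ}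
    (r : Fin M → ℕ) (S : Finset (Fin M)) (F : Ω → Finset (Fin M))
    (rt : Fin M → Ω → ℕ) (p : ℝ) : Prop :=
  ∀ j ∈ S, ∀ j' ∈ S, r j < r j' →
    ENNReal.ofReal p ≤ μ[|{ω | j ∈ F ω ∧ j' ∈ F ω}] {ω | rt j ω < rt j' ω}

/-- Unbiased Ordering. -/
def UnbiasedOrdering {Ω : Type*} [MeasurableSpace Ω] (μ : Measure Ω) {M : ℕ}
    (r : Fin M → ℕ) (S : Finset (Fin M)) (F : Ω → Finset (Fin M))
    (rt : Fin M → Ω → ℕ) : Prop :=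
  ∀ j ∈ S, ∀ j' ∈ S, r j < r j' →
    (∫ ω, (rt j ω : ℝ) ∂ μ[|{ω | j ∈ F ω ∧ j' ∉ F ω}]) <
      ∫ ω, (rt j' ω : ℝ) ∂ μ[|{ω | j' ∈ F ω ∧ j ∉ F ω}]

/-- Bounded Deviation with constant `C`. -/
def BoundedDeviation {Ω : Type*} [MeasurableSpace Ω] (μ : Measure Ω) {M : ℕ}
    (r : Fin M → ℕ) (S : Finset (Fin M)) (F : Ω → Finset (Fin M))
    (rt : Fin M → Ω → ℕ) (C : ℝ) : Prop :=
  ∀ j ∈ S, ∀ j' ∈ S, r j < r j' →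
    μ {ω | (j ∈ F ω ∧ j' ∈ F ω) ∧ rt j ω < rt j' ω} ≠ 0 →
    μ {ω | (j ∈ F ω ∧ j' ∈ F ω) ∧ rt j' ω < rt j ω} ≠ 0 →
    C < (∫ ω, ((rt j' ω : ℝ) - (rt j ω : ℝ)) ∂ μ[|{ω | (j ∈ F ω ∧ j' ∈ F ω) ∧ rt j ω < rt j' ω}]) -
        ∫ ω, ((rt j ω : ℝ) - (rt j' ω : ℝ)) ∂ μ[|{ω | (j ∈ F ω ∧ j' ∈ F ω) ∧ rt j' ω < rt j ω}]

/-- Unique Top-`k` Ranks. -/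
def UniqueTopK {M : ℕ} (r : Fin M → ℕ) (k : ℕ) : Prop :=
  (∀ j j' : Fin M, j ≠ j' → min (r j) (r j') < k → r j ≠ r j') ∧
    ∀ s < k, ∃ j : Fin M, r j = s

/-- The pair `(F, r̃)` viewed as a single random variable. -/
def pairRV {Ω : Type*} {M : ℕ} (F : Ω → Finset (Fin M)) (rt : Fin M → Ω → ℕ) (ω : Ω) :
    Finset (Fin M) × (Fin M → ℕ) := (F ω, fun j => rt j ω)

/-- RAMP with `B` minipatches on `S`: `(Fb b, rtb b)` for `b = 1,…,B` are i.i.d. copies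
of the random minipatch ranking `(F, rt)` on `S`. -/
structure IsRAMP {Ω : Type*} [MeasurableSpace Ω] (μ : Measure Ω) {M : ℕ} (m : ℕ)
    (S : Finset (Fin M)) (F : Ω → Finset (Fin M)) (rt : Fin M → Ω → ℕ) {B : ℕ}
    (Fb : Fin B → Ω → Finset (Fin M)) (rtb : Fin B → Fin M → Ω → ℕ) : Prop where
  copies : ∀ b, IsMinipatchRanking μ m S (Fb b) (rtb b)
  ident : ∀ b, Measure.map (pairRV (Fb b) (rtb b)) μ = Measure.map (pairRV F rt) μ
  indep : iIndepFun (fun b => pairRV (Fb b) (rtb b)) μ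

/-- The averaged rank `r̄_j` produced by RAMP: the arithmetic mean of `rtb b j` over the
minipatches `b` containing `j`, with the convention `r̄_j = μ_j` if `j` appears in none. -/
def rampAvg {Ω : Type*} [MeasurableSpace Ω] (μ : Measure Ω) {M B : ℕ}
    (F : Ω → Finset (Fin M)) (rt : Fin M → Ω → ℕ)
    (Fb : Fin B → Ω → Finset (Fin M)) (rtb : Fin B → Fin M → Ω → ℕ)
    (j : Fin M) (ω : Ω) : ℝ :=
  if (Finset.univ.filter (fun b : Fin B => j ∈ Fb b ω)).card = 0 then muRank μ F rt j
  else (∑ b ∈ Finset.univ.filter (fun b : Fin B => j ∈ Fb b ω), (rtb b j ω : ℝ)) /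
    (Finset.univ.filter (fun b : Fin B => j ∈ Fb b ω)).card

/-!
Write `c = μ_j`, `d = m - 1` and `A_b = {j ∈ F_b}`, an event of probability `q = m / N`.
If `r̄_j ≥ c + ε` (resp. `r̄_j ≤ c - ε`), then `j` lies in some minipatch and
`∑_b 1_{A_b} (σ (r̃^b_j - c) - ε) ≥ 0` with `σ = 1` (resp. `σ = -1`). The summands are independent
and, conditionally on `A_b`, `σ (r̃^b_j - c)` is centred with range `d`, because `μ_j` depends only
on the law of a minipatch ranking. Hoeffding's lemma at `t = 4ε / d²` therefore bounds each moment
generating function by `1 - q + q e^{-2ε²/d²} ≤ e^{-qε²/(4d²)}` when `ε ≤ d`, and the Chernoff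
bound gives `e^{-Bqε²/(4d²)}` for both tails. When `ε > d` both events are empty, as all ranks and
their averages lie in `[0, d]`.
-/

lemma Finset.card_filter_mem_powersetCard {α : Type*} [DecidableEq α] {s : Finset α} {a : α}
    (ha : a ∈ s) {k : ℕ} (hk : 0 < k) :
    ({t ∈ s.powersetCard k | a ∈ t}).card = (s.card - 1).choose (k - 1) := by
  rw [← Finset.card_erase_of_mem ha, ← Finset.card_powersetCard]
  refine Finset.card_nbij' (·.erase a) (insert a) (fun t ht => ?_) (fun t ht => ?_)
    (fun t ht => Finset.insert_erase (Finset.mem_filter.1 ht).2) (fun t ht => ?_)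
  · simp only [Finset.coe_filter, Finset.mem_powersetCard, Set.mem_ofPred_eq] at ht
    simp only [Finset.mem_coe, Finset.mem_powersetCard]
    exact ⟨Finset.erase_subset_erase a ht.1.1, by rw [Finset.card_erase_of_mem ht.2, ht.1.2]⟩
  · simp only [Finset.mem_coe, Finset.mem_powersetCard] at ht
    have hat : a ∉ t := fun h => by simpa using ht.1 h
    simp only [Finset.coe_filter, Finset.mem_powersetCard, Set.mem_ofPred_eq]
    refine ⟨⟨Finset.insert_subset ha (ht.1.trans (Finset.erase_subset a s)), ?_⟩,
      Finset.mem_insert_self a t⟩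
    rw [Finset.card_insert_of_notMem hat, ht.2]
    omega
  · simp only [Finset.mem_coe, Finset.mem_powersetCard] at ht
    exact Finset.erase_insert fun h => by simpa using ht.1 h

lemma Nat.cast_choose_pred_div_choose {n k : ℕ} (hk : 0 < k) (hkn : k ≤ n) :
    ((n - 1).choose (k - 1) : ℝ) / n.choose k = k / n := by
  obtain ⟨n, rfl⟩ : ∃ n', n = n' + 1 := ⟨n - 1, by omega⟩
  obtain ⟨k, rfl⟩ : ∃ k', k = k' + 1 := ⟨k - 1, by omega⟩
  have hchoose := Nat.add_one_mul_choose_eq n k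
  have hpos : ((n + 1).choose (k + 1) : ℝ) ≠ 0 := by
    exact_mod_cast (Nat.choose_pos hkn).ne'
  rw [Nat.add_sub_cancel, Nat.add_sub_cancel, div_eq_div_iff hpos (by positivity)]
  norm_cast
  linarith

lemma one_sub_add_mul_exp_neg_two_mul_le {q x : ℝ} (hq : 0 ≤ q) (hx0 : 0 ≤ x)
    (hx1 : x ≤ 1) : 1 - q + q * exp (-(2 * x)) ≤ exp (-(q * x / 4)) := by
  have hexp : exp (-(2 * x)) ≤ 1 - x / 4 := by
    have h1 := add_one_le_exp (2 * x)
    have h2 : exp (-(2 * x)) * exp (2 * x) = 1 := by rw [← exp_add]; simp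
    nlinarith [exp_pos (-(2 * x))]
  calc 1 - q + q * exp (-(2 * x)) ≤ -(q * x / 4) + 1 := by nlinarith
    _ ≤ exp (-(q * x / 4)) := add_one_le_exp _

namespace ProbabilityTheory

variable {Ω : Type*} [MeasurableSpace Ω] {μ : Measure Ω} {A : Set Ω} {Y : Ω → ℝ} {a b : ℝ}

lemma cond_map {α : Type*} [MeasurableSpace α] {X : Ω → α} (hX : Measurable X) {s : Set α}
    (hs : MeasurableSet s) : (μ.map X)[|s] = (μ[|X ⁻¹' s]).map X := by
  rw [cond, cond, Measure.map_apply hX hs, Measure.restrict_map hX hs, Measure.map_smul]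

lemma integrable_exp_mul_indicator [IsFiniteMeasure μ] (hA : MeasurableSet A)
    (hY : Measurable Y) (hb : ∀ ω ∈ A, Y ω ∈ Set.Icc a b) (t : ℝ) :
    Integrable (fun ω => exp (t * A.indicator Y ω)) μ := by
  refine integrable_exp_mul_of_mem_Icc (a := min a 0) (b := max b 0)
    (hY.indicator hA).aemeasurable (ae_of_all _ fun ω => ?_)
  by_cases hω : ω ∈ A
  · simp only [Set.indicator_of_mem hω]
    exact ⟨min_le_of_left_le (hb ω hω).1, le_max_of_le_left (hb ω hω).2⟩
  · simp [Set.indicator_of_notMem hω]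

lemma mgf_indicator_le [IsFiniteMeasure μ] (hA : MeasurableSet A) (hY : Measurable Y)
    (hb : ∀ ω ∈ A, Y ω ∈ Set.Icc a b) (t : ℝ) :
    mgf (A.indicator Y) μ t ≤
      μ.real Aᶜ + μ.real A * exp (t * ∫ ω, Y ω ∂μ[|A] + (b - a) ^ 2 * t ^ 2 / 8) := by
  have hint := integrable_exp_mul_indicator (μ := μ) hA hY hb t
  have hsplit : mgf (A.indicator Y) μ t =
      mgf (A.indicator Y) (μ.restrict Aᶜ) t + mgf (A.indicator Y) (μ.restrict A) t := by
    rw [← mgf_add_measure hint.restrict hint.restrict, add_comm,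
      Measure.restrict_add_restrict_compl hA]
  have hout : mgf (A.indicator Y) (μ.restrict Aᶜ) t = μ.real Aᶜ := by
    rw [mgf_congr (Y := 0) ?_, mgf_zero_fun, measureReal_restrict_apply_univ]
    filter_upwards [ae_restrict_mem hA.compl] with ω hω
    exact Set.indicator_of_notMem hω _
  by_cases hA0 : μ A = 0
  · rw [hsplit, hout, Measure.restrict_eq_zero.2 hA0, mgf_zero_measure]
    simp [measureReal_def, hA0]
  have hin : mgf (A.indicator Y) (μ.restrict A) t = μ.real A * mgf Y μ[|A] t := by
    rw [mgf_congr (Y := Y) ((ae_restrict_mem hA).mono fun ω hω => Set.indicator_of_mem hω _),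
      cond, mgf_smul_measure, ← mul_assoc, measureReal_def, ← ENNReal.toReal_mul,
      ENNReal.mul_inv_cancel hA0 (measure_ne_top μ A), ENNReal.toReal_one, one_mul]
  have : IsProbabilityMeasure μ[|A] := cond_isProbabilityMeasure (μ := μ) hA0
  have hoeffding : mgf Y μ[|A] t ≤ exp (t * ∫ ω, Y ω ∂μ[|A] + (b - a) ^ 2 * t ^ 2 / 8) := by
    have hsub := (hasSubgaussianMGF_of_mem_Icc (μ := μ[|A]) hY.aemeasurable
      (ae_cond_of_forall_mem hA hb)).mgf_le t
    calc mgf Y μ[|A] t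
        = mgf (fun ω => Y ω - ∫ ω, Y ω ∂μ[|A]) μ[|A] t * exp (t * ∫ ω, Y ω ∂μ[|A]) := by
          rw [← mgf_add_const]; simp
      _ ≤ exp ((b - a) ^ 2 * t ^ 2 / 8) * exp (t * ∫ ω, Y ω ∂μ[|A]) := by
          refine mul_le_mul_of_nonneg_right (hsub.trans_eq ?_) (exp_pos _).le
          congr 1
          simp only [NNReal.coe_pow, NNReal.coe_div, coe_nnnorm, Real.norm_eq_abs,
            NNReal.coe_ofNat, div_pow, sq_abs]
          ring
      _ = _ := by rw [← exp_add, add_comm]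
  rw [hsplit, hout, hin]
  gcongr

lemma measureReal_sum_indicator_sub_nonneg_le [IsProbabilityMeasure μ] {ι : Type*} [Fintype ι]
    {A : ι → Set Ω} {Y : ι → Ω → ℝ} {a : ι → ℝ} {q d ε : ℝ}
    (hA : ∀ i, MeasurableSet (A i)) (hμA : ∀ i, μ.real (A i) = q) (hq : 0 < q)
    (hY : ∀ i, Measurable (Y i)) (hb : ∀ i, ∀ ω ∈ A i, Y i ω ∈ Set.Icc (a i) (a i + d))
    (hY0 : ∀ i, ∫ ω, Y i ω ∂μ[|A i] = 0)
    (hindep : iIndepFun (fun i => (A i).indicator fun ω => Y i ω - ε) μ)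
    (hε : 0 < ε) (hεd : ε ≤ d) :
    μ.real {ω | 0 ≤ ∑ i, (A i).indicator (fun ω => Y i ω - ε) ω} ≤
      exp (-(Fintype.card ι * q * ε ^ 2) / (4 * d ^ 2)) := by
  set W : ι → Ω → ℝ := fun i => (A i).indicator fun ω => Y i ω - ε
  set t := 4 * ε / d ^ 2
  have hd : 0 < d := hε.trans_le hεd
  have hWb : ∀ i, ∀ ω ∈ A i, Y i ω - ε ∈ Set.Icc (a i - ε) (a i - ε + d) := fun i ω hω => by
    obtain ⟨h1, h2⟩ := hb i ω hω
    constructor <;> linarith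
  have hWm : ∀ i, Measurable (W i) := fun i => ((hY i).sub_const ε).indicator (hA i)
  have hmgf : ∀ i, mgf (W i) μ t ≤ exp (-(q * (ε ^ 2 / d ^ 2) / 4)) := fun i => by
    have hA0 : μ (A i) ≠ 0 := by
      rw [← measureReal_ne_zero_iff, hμA]; exact hq.ne'
    have : IsProbabilityMeasure μ[|A i] := cond_isProbabilityMeasure (μ := μ) hA0
    have hint : Integrable (Y i) μ[|A i] :=
      Integrable.of_mem_Icc (a i) (a i + d) (hY i).aemeasurable
        (ae_cond_of_forall_mem (hA i) (hb i))
    have hmean : ∫ ω, Y i ω - ε ∂μ[|A i] = -ε := by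
      rw [integral_sub hint (integrable_const ε), hY0, integral_const]; simp
    have hx1 : ε ^ 2 / d ^ 2 ≤ 1 := by
      rw [div_le_one (by positivity)]; nlinarith
    calc mgf (W i) μ t
        ≤ μ.real (A i)ᶜ + μ.real (A i) *
            exp (t * ∫ ω, Y i ω - ε ∂μ[|A i] + (a i - ε + d - (a i - ε)) ^ 2 * t ^ 2 / 8) :=
          mgf_indicator_le (hA i) ((hY i).sub_const ε) (hWb i) t
      _ = 1 - q + q * exp (-(2 * (ε ^ 2 / d ^ 2))) := by
          rw [measureReal_compl (hA i), probReal_univ, hμA, hmean]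
          congr 3
          simp only [t]
          field_simp
          ring
      _ ≤ exp (-(q * (ε ^ 2 / d ^ 2) / 4)) :=
          one_sub_add_mul_exp_neg_two_mul_le hq.le (by positivity) hx1
  have hint : Integrable (fun ω => exp (t * (∑ i, W i) ω)) μ :=
    hindep.integrable_exp_mul_sum hWm fun i _ =>
      integrable_exp_mul_indicator (hA i) ((hY i).sub_const ε) (hWb i) t
  calc μ.real {ω | 0 ≤ ∑ i, W i ω}
      ≤ exp (-t * 0) * mgf (∑ i, W i) μ t := by
        simpa only [Finset.sum_apply] using measure_ge_le_exp_mul_mgf 0 (by positivity) hint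
    _ = ∏ i, mgf (W i) μ t := by rw [mul_zero, exp_zero, one_mul, hindep.mgf_sum hWm]
    _ ≤ ∏ _i : ι, exp (-(q * (ε ^ 2 / d ^ 2) / 4)) :=
        Finset.prod_le_prod (fun i _ => mgf_nonneg) fun i _ => hmgf i
    _ = exp (-(Fintype.card ι * q * ε ^ 2) / (4 * d ^ 2)) := by
        rw [Finset.prod_const, Finset.card_univ, ← exp_nat_mul]
        congr 1
        field_simp

end ProbabilityTheory

namespace IsMinipatchRanking

variable {Ω : Type*} [MeasurableSpace Ω] {μ : Measure Ω} {M m : ℕ} {S : Finset (Fin M)}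
  {F : Ω → Finset (Fin M)} {rt : Fin M → Ω → ℕ}

lemma measurableSet_mem (h : IsMinipatchRanking μ m S F rt) (j : Fin M) :
    MeasurableSet {ω | j ∈ F ω} :=
  h.measF (DiscreteMeasurableSpace.forall_measurableSet {t | j ∈ t})

lemma measurable_pairRV (h : IsMinipatchRanking μ m S F rt) : Measurable (pairRV F rt) :=
  h.measF.prodMk (measurable_pi_lambda _ h.measRt)

lemma rank_le (h : IsMinipatchRanking μ m S F rt) {j : Fin M} {ω : Ω} (hj : j ∈ F ω) :
    (rt j ω : ℝ) ≤ m - 1 := by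
  have : rt j ω + 1 ≤ m := (h.bij ω).mapsTo hj
  rw [le_sub_iff_add_le]
  exact_mod_cast this

lemma le_card [NeZero μ] (h : IsMinipatchRanking μ m S F rt) : m ≤ S.card := by
  obtain ⟨ω⟩ := μ.nonempty_of_neZero
  exact h.card_eq ω ▸ Finset.card_le_card (h.subset ω)

lemma measureReal_mem [NeZero μ] (h : IsMinipatchRanking μ m S F rt) {j : Fin M}
    (hj : j ∈ S) (hm : 0 < m) : μ.real {ω | j ∈ F ω} = m / S.card := by
  set 𝒜 := {t ∈ S.powersetCard m | j ∈ t}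
  have hpre : {ω | j ∈ F ω} = F ⁻¹' 𝒜 := by
    ext ω
    simp [𝒜, h.subset ω, h.card_eq ω]
  have hmeas : μ {ω | j ∈ F ω} = 𝒜.card * (S.card.choose m : ℝ≥0∞)⁻¹ := by
    rw [hpre, ← sum_measure_preimage_singleton 𝒜 fun t _ =>
        h.measF (DiscreteMeasurableSpace.forall_measurableSet _),
      Finset.sum_congr rfl fun t ht => ?_, Finset.sum_const, nsmul_eq_mul]
    obtain ⟨htS, htm⟩ := Finset.mem_powersetCard.1 (Finset.mem_filter.1 ht).1
    exact h.uniform t htS htm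
  rw [measureReal_def, hmeas, ENNReal.toReal_mul, ENNReal.toReal_inv, ENNReal.toReal_natCast,
    ENNReal.toReal_natCast, ← div_eq_mul_inv, Finset.card_filter_mem_powersetCard hj hm,
    Nat.cast_choose_pred_div_choose hm h.le_card]

lemma measure_mem_ne_zero [IsProbabilityMeasure μ] (h : IsMinipatchRanking μ m S F rt)
    {j : Fin M} (hj : j ∈ S) (hm : 0 < m) : μ {ω | j ∈ F ω} ≠ 0 := by
  rw [← measureReal_ne_zero_iff, h.measureReal_mem hj hm]
  exact (div_pos (by exact_mod_cast hm) (by exact_mod_cast hm.trans_le h.le_card)).ne'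

lemma integrable_cond (h : IsMinipatchRanking μ m S F rt) (j : Fin M) :
    Integrable (fun ω => (rt j ω : ℝ)) μ[|{ω | j ∈ F ω}] :=
  Integrable.of_mem_Icc 0 (m - 1) (Measurable.of_discrete.comp (h.measRt j)).aemeasurable
    (ae_cond_of_forall_mem (h.measurableSet_mem j) fun _ hω => ⟨Nat.cast_nonneg _, h.rank_le hω⟩)

lemma muRank_mem_Icc [IsFiniteMeasure μ] (h : IsMinipatchRanking μ m S F rt) {j : Fin M}
    (hμ : μ {ω | j ∈ F ω} ≠ 0) : muRank μ F rt j ∈ Set.Icc 0 ((m : ℝ) - 1) := by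
  have : IsProbabilityMeasure μ[|{ω | j ∈ F ω}] := cond_isProbabilityMeasure hμ
  refine ⟨integral_nonneg fun _ => Nat.cast_nonneg _, ?_⟩
  calc muRank μ F rt j ≤ ∫ _, ((m : ℝ) - 1) ∂μ[|{ω | j ∈ F ω}] :=
        integral_mono_ae (h.integrable_cond j) (integrable_const _)
          (ae_cond_of_forall_mem (h.measurableSet_mem j) fun _ hω => h.rank_le hω)
    _ = (m : ℝ) - 1 := by simp

lemma integral_cond_sub_muRank [IsFiniteMeasure μ] (h : IsMinipatchRanking μ m S F rt)
    {j : Fin M} (hμ : μ {ω | j ∈ F ω} ≠ 0) :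
    ∫ ω, ((rt j ω : ℝ) - muRank μ F rt j) ∂μ[|{ω | j ∈ F ω}] = 0 := by
  have : IsProbabilityMeasure μ[|{ω | j ∈ F ω}] := cond_isProbabilityMeasure hμ
  rw [integral_sub (h.integrable_cond j) (integrable_const _), integral_const, probReal_univ,
    one_smul, muRank, sub_self]

end IsMinipatchRanking

section Ranks

variable {Ω : Type*} [MeasurableSpace Ω] {μ : Measure Ω} {M : ℕ} {F : Ω → Finset (Fin M)}
  {rt : Fin M → Ω → ℕ}

lemma muRank_eq_integral_map (hpair : Measurable (pairRV F rt)) (j : Fin M) :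
    muRank μ F rt j = ∫ p, (p.2 j : ℝ) ∂(μ.map (pairRV F rt))[|{p | j ∈ p.1}] := by
  rw [cond_map hpair (DiscreteMeasurableSpace.forall_measurableSet _),
    integral_map hpair.aemeasurable Measurable.of_discrete.aestronglyMeasurable]
  rfl

lemma muRank_eq_of_map_pairRV_eq {F' : Ω → Finset (Fin M)} {rt' : Fin M → Ω → ℕ}
    (hpair : Measurable (pairRV F rt)) (hpair' : Measurable (pairRV F' rt'))
    (hlaw : μ.map (pairRV F rt) = μ.map (pairRV F' rt')) (j : Fin M) :
    muRank μ F rt j = muRank μ F' rt' j := by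
  rw [muRank_eq_integral_map hpair, muRank_eq_integral_map hpair', hlaw]

end Ranks

section Ramp

variable {Ω : Type*} [MeasurableSpace Ω] {μ : Measure Ω} {M m B : ℕ} {S : Finset (Fin M)}
  {F : Ω → Finset (Fin M)} {rt : Fin M → Ω → ℕ}
  {Fb : Fin B → Ω → Finset (Fin M)} {rtb : Fin B → Fin M → Ω → ℕ}

lemma rampAvg_mem_Icc (hcopies : ∀ b, IsMinipatchRanking μ m S (Fb b) (rtb b)) {j : Fin M}
    (hc : muRank μ F rt j ∈ Set.Icc 0 ((m : ℝ) - 1)) (ω : Ω) :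
    rampAvg μ F rt Fb rtb j ω ∈ Set.Icc 0 ((m : ℝ) - 1) := by
  unfold rampAvg
  split_ifs with hn
  · exact hc
  set T := Finset.univ.filter fun b : Fin B => j ∈ Fb b ω
  have hT : (0 : ℝ) < T.card := by exact_mod_cast Nat.pos_of_ne_zero hn
  have hsum : ∑ b ∈ T, (rtb b j ω : ℝ) ≤ T.card * ((m : ℝ) - 1) := by
    simpa using Finset.sum_le_card_nsmul T _ _ fun b hb =>
      (hcopies b).rank_le (Finset.mem_filter.1 hb).2
  exact ⟨by positivity, (div_le_iff₀ hT).2 (by linarith)⟩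

lemma nonneg_sum_indicator_of_le_mul_rampAvg_sub {j : Fin M} {ω : Ω} {σ ε : ℝ} (hε : 0 < ε)
    (h : ε ≤ σ * (rampAvg μ F rt Fb rtb j ω - muRank μ F rt j)) :
    0 ≤ ∑ b, {ω | j ∈ Fb b ω}.indicator
      (fun ω => σ * ((rtb b j ω : ℝ) - muRank μ F rt j) - ε) ω := by
  set c := muRank μ F rt j
  set T := Finset.univ.filter fun b : Fin B => j ∈ Fb b ω
  unfold rampAvg at h
  split_ifs at h with hn
  · simp only [c, sub_self, mul_zero] at h
    linarith
  have hT : (0 : ℝ) < T.card := by exact_mod_cast Nat.pos_of_ne_zero hn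
  have hsum : ∑ b, {ω | j ∈ Fb b ω}.indicator (fun ω => σ * ((rtb b j ω : ℝ) - c) - ε) ω =
      T.card * (σ * ((∑ b ∈ T, (rtb b j ω : ℝ)) / T.card - c) - ε) := by
    simp only [Set.indicator_apply, Set.mem_ofPred_eq]
    rw [← Finset.sum_filter, Finset.sum_sub_distrib, ← Finset.mul_sum, Finset.sum_sub_distrib]
    simp only [Finset.sum_const, nsmul_eq_mul]
    field_simp
    ring
  rw [hsum]
  exact mul_nonneg hT.le (by linarith)

lemma IsRAMP.iIndepFun_indicator (hramp : IsRAMP μ m S F rt Fb rtb) (j : Fin M) (f : ℕ → ℝ) :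
    iIndepFun (fun b => {ω | j ∈ Fb b ω}.indicator fun ω => f (rtb b j ω)) μ := by
  convert hramp.indep.comp (fun _ p => {p : Finset (Fin M) × (Fin M → ℕ) | j ∈ p.1}.indicator
    (fun p => f (p.2 j)) p) fun _ => Measurable.of_discrete using 1
  ext b ω
  by_cases hω : j ∈ Fb b ω <;> simp [hω, pairRV]

lemma IsRAMP.muRank_copy (hramp : IsRAMP μ m S F rt Fb rtb) (hmp : IsMinipatchRanking μ m S F rt)
    (b : Fin B) (j : Fin M) : muRank μ (Fb b) (rtb b) j = muRank μ F rt j :=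
  muRank_eq_of_map_pairRV_eq (hramp.copies b).measurable_pairRV hmp.measurable_pairRV
    (hramp.ident b) j

lemma IsRAMP.abs_rampAvg_sub_muRank_le [IsFiniteMeasure μ] (hramp : IsRAMP μ m S F rt Fb rtb)
    (hmp : IsMinipatchRanking μ m S F rt) {j : Fin M} (hμ : μ {ω | j ∈ F ω} ≠ 0) (ω : Ω) :
    |rampAvg μ F rt Fb rtb j ω - muRank μ F rt j| ≤ (m : ℝ) - 1 := by
  have hc := hmp.muRank_mem_Icc hμ
  have hr := rampAvg_mem_Icc hramp.copies hc ω
  exact abs_sub_le_iff.2 ⟨by linarith [hr.2, hc.1], by linarith [hr.1, hc.2]⟩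

lemma IsRAMP.measure_le_mul_rampAvg_sub_le [IsProbabilityMeasure μ]
    (hramp : IsRAMP μ m S F rt Fb rtb) (hmp : IsMinipatchRanking μ m S F rt) (hm : 2 ≤ m)
    {j : Fin M} (hj : j ∈ S) {ε : ℝ} (hε : 0 < ε) {σ : ℝ} (hσ : σ = 1 ∨ σ = -1) :
    μ {ω | ε ≤ σ * (rampAvg μ F rt Fb rtb j ω - muRank μ F rt j)} ≤
      ENNReal.ofReal (exp (-(B * ((m : ℝ) / S.card) * ε ^ 2) / (4 * ((m : ℝ) - 1) ^ 2))) := by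
  set c := muRank μ F rt j
  set d : ℝ := (m : ℝ) - 1
  have hμA := hmp.measure_mem_ne_zero hj (by omega)
  rcases le_or_gt ε d with hεd | hdε
  swap
  · have hempty : {ω | ε ≤ σ * (rampAvg μ F rt Fb rtb j ω - c)} = ∅ := by
      refine Set.eq_empty_of_forall_notMem fun ω (hω : ε ≤ _) => ?_
      have hdev := abs_le.1 (hramp.abs_rampAvg_sub_muRank_le hmp hμA ω)
      rcases hσ with rfl | rfl <;> linarith
    simp [hempty]
  have hc : c ∈ Set.Icc 0 d := hmp.muRank_mem_Icc hμA
  obtain ⟨a, ha⟩ : ∃ a, ∀ x ∈ Set.Icc 0 d, σ * (x - c) ∈ Set.Icc a (a + d) := by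
    rcases hσ with rfl | rfl
    · exact ⟨-c, fun x hx => ⟨by linarith [hx.1], by linarith [hx.2]⟩⟩
    · exact ⟨c - d, fun x hx => ⟨by linarith [hx.2, hc.2], by linarith [hx.1]⟩⟩
  have hq : 0 < (m : ℝ) / S.card :=
    div_pos (by positivity) (by exact_mod_cast (show 0 < m by omega).trans_le hmp.le_card)
  set W : Fin B → Ω → ℝ := fun b => {ω | j ∈ Fb b ω}.indicator
    fun ω => σ * ((rtb b j ω : ℝ) - c) - ε
  have hsub : {ω | ε ≤ σ * (rampAvg μ F rt Fb rtb j ω - c)} ⊆ {ω | 0 ≤ ∑ b, W b ω} :=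
    fun ω hω => nonneg_sum_indicator_of_le_mul_rampAvg_sub hε hω
  refine (measure_mono hsub).trans ?_
  rw [← ofReal_measureReal]
  refine ENNReal.ofReal_le_ofReal ?_
  simpa [W] using measureReal_sum_indicator_sub_nonneg_le (A := fun b => {ω | j ∈ Fb b ω})
    (Y := fun b ω => σ * ((rtb b j ω : ℝ) - c)) (a := fun _ => a)
    (fun b => (hramp.copies b).measurableSet_mem j)
    (fun b => (hramp.copies b).measureReal_mem hj (by omega)) hq
    (fun b => (Measurable.of_discrete (f := fun n : ℕ => σ * ((n : ℝ) - c))).comp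
      ((hramp.copies b).measRt j))
    (fun b ω hω => ha _ ⟨Nat.cast_nonneg _, (hramp.copies b).rank_le hω⟩)
    (fun b => by
      rw [integral_const_mul, show c = _ from (hramp.muRank_copy hmp b j).symm,
        (hramp.copies b).integral_cond_sub_muRank ((hramp.copies b).measure_mem_ne_zero hj
          (by omega)), mul_zero])
    (hramp.iIndepFun_indicator j fun n => σ * ((n : ℝ) - c) - ε) hε hεd

end Ramp

theorem ramp_concentration_general {Ω : Type*} [MeasurableSpace Ω] (μ : Measure Ω)
    [IsProbabilityMeasure μ] {M m N B : ℕ} (hm2 : 2 ≤ m)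
    (S : Finset (Fin M)) (hN : S.card = N)
    (F : Ω → Finset (Fin M)) (rt : Fin M → Ω → ℕ)
    (hmp : IsMinipatchRanking μ m S F rt)
    (Fb : Fin B → Ω → Finset (Fin M)) (rtb : Fin B → Fin M → Ω → ℕ)
    (hramp : IsRAMP μ m S F rt Fb rtb)
    (q : ℝ) (hq : q = (m : ℝ) / N)
    (j : Fin M) (hj : j ∈ S) (ε : ℝ) (hε : 0 < ε) :
    μ {ω | muRank μ F rt j + ε ≤ rampAvg μ F rt Fb rtb j ω} ≤
        ENNReal.ofReal (Real.exp (-(B * q) / 8) +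
          Real.exp (-(B * q * ε ^ 2) / (4 * ((m : ℝ) - 1) ^ 2))) ∧
      μ {ω | rampAvg μ F rt Fb rtb j ω ≤ muRank μ F rt j - ε} ≤
        ENNReal.ofReal (Real.exp (-(B * q) / 8) +
          Real.exp (-(B * q * ε ^ 2) / (4 * ((m : ℝ) - 1) ^ 2))) := by
  subst hq hN
  have tail := fun σ (hσ : σ = 1 ∨ σ = -1) =>
    (hramp.measure_le_mul_rampAvg_sub_le hmp hm2 hj hε hσ).trans
      (ENNReal.ofReal_le_ofReal (le_add_of_nonneg_left (exp_pos (-(B * (m / S.card)) / 8)).le))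
  constructor
  · refine le_trans (measure_mono fun ω hω => ?_) (tail 1 (Or.inl rfl))
    simp only [Set.mem_ofPred_eq] at hω ⊢
    linarith
  · refine le_trans (measure_mono fun ω hω => ?_) (tail (-1) (Or.inr rfl))
    simp only [Set.mem_ofPred_eq] at hω ⊢
    linarith

theorem ramp_concentration {Ω : Type*} [MeasurableSpace Ω] (μ : Measure Ω)
    [IsProbabilityMeasure μ] {M m N B : ℕ} (hm2 : 2 ≤ m) (hmM : m ≤ M)
    (S : Finset (Fin M)) (hN : S.card = N) (hmN : m ≤ N)
    (F : Ω → Finset (Fin M)) (rt : Fin M → Ω → ℕ)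
    (hmp : IsMinipatchRanking μ m S F rt)
    (Fb : Fin B → Ω → Finset (Fin M)) (rtb : Fin B → Fin M → Ω → ℕ)
    (hramp : IsRAMP μ m S F rt Fb rtb)
    (q : ℝ) (hq : q = (m : ℝ) / N)
    (j : Fin M) (hj : j ∈ S) (ε : ℝ) (hε : 0 < ε) :
    μ {ω | muRank μ F rt j + ε ≤ rampAvg μ F rt Fb rtb j ω} ≤
        ENNReal.ofReal (Real.exp (-(B * q) / 8) +
          Real.exp (-(B * q * ε ^ 2) / (4 * ((m : ℝ) - 1) ^ 2))) ∧
      μ {ω | rampAvg μ F rt Fb rtb j ω ≤ muRank μ F rt j - ε} ≤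
        ENNReal.ofReal (Real.exp (-(B * q) / 8) +
          Real.exp (-(B * q * ε ^ 2) / (4 * ((m : ℝ) - 1) ^ 2))) :=
  ramp_concentration_general μ hm2 S hN F rt hmp Fb rtb hramp q hq j hj ε hε
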